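/- arXiv:2505.04250 — 4 statements merged into one kernel-verified Lean document; each statement's English description precedes it below -/
import Mathlib

section
/- Let ω > 0 and 0 < γ < sqrt(ω). Define F_+(p) = sqrt(p²(ω - p²/2)) - (p/2)(γ + sqrt(ω - p²/2)) for p ∈ (0, sqrt(2ω)]. Then F_+(p) > 0 for 0 < p < sqrt(2(ω-γ²)), F_+(sqrt(2(ω-γ²))) = 0, and F_+(p) < 0 for sqrt(2(ω-γ²)) < p ≤ sqrt(2ω). -/
theorem stmt_9 (ω γ : ℝ) (hω : 0 < ω) (hγ : 0 < γ) (hγω : γ < Real.sqrt ω) :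
    (∀ p : ℝ, 0 < p → p < Real.sqrt (2 * (ω - γ ^ 2)) →
      0 < Real.sqrt (p ^ 2 * (ω - p ^ 2 / 2))
        - p / 2 * (γ + Real.sqrt (ω - p ^ 2 / 2))) ∧
    Real.sqrt (Real.sqrt (2 * (ω - γ ^ 2)) ^ 2 * (ω - Real.sqrt (2 * (ω - γ ^ 2)) ^ 2 / 2))
      - Real.sqrt (2 * (ω - γ ^ 2)) / 2
        * (γ + Real.sqrt (ω - Real.sqrt (2 * (ω - γ ^ 2)) ^ 2 / 2)) = 0 ∧
    (∀ p : ℝ, Real.sqrt (2 * (ω - γ ^ 2)) < p → p ≤ Real.sqrt (2 * ω) →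
      Real.sqrt (p ^ 2 * (ω - p ^ 2 / 2))
        - p / 2 * (γ + Real.sqrt (ω - p ^ 2 / 2)) < 0) := by
  have hγ2 : γ ^ 2 < ω := (Real.lt_sqrt hγ.le).mp hγω
  have key : ∀ p : ℝ, 0 ≤ p →
      Real.sqrt (p ^ 2 * (ω - p ^ 2 / 2)) - p / 2 * (γ + Real.sqrt (ω - p ^ 2 / 2))
        = p / 2 * (Real.sqrt (ω - p ^ 2 / 2) - γ) := by
    intro p hp
    rw [Real.sqrt_mul (sq_nonneg p), Real.sqrt_sq hp]; ring
  refine ⟨?_, ?_, ?_⟩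
  · intro p hp hplt
    have hp2 : p ^ 2 < 2 * (ω - γ ^ 2) := (Real.lt_sqrt hp.le).mp hplt
    have hs : γ < Real.sqrt (ω - p ^ 2 / 2) :=
      (Real.lt_sqrt hγ.le).mpr (by linarith)
    rw [key p hp.le]
    exact mul_pos (by linarith) (by linarith)
  · set p0 := Real.sqrt (2 * (ω - γ ^ 2)) with hp0def
    have hp0 : p0 ^ 2 = 2 * (ω - γ ^ 2) := Real.sq_sqrt (by linarith)
    rw [key p0 (Real.sqrt_nonneg _)]
    have h1 : ω - p0 ^ 2 / 2 = γ ^ 2 := by rw [hp0]; ring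
    rw [h1, Real.sqrt_sq hγ.le]; ring
  · intro p hgt hle
    have hp : 0 < p := lt_of_le_of_lt (Real.sqrt_nonneg _) hgt
    have hp2 : 2 * (ω - γ ^ 2) < p ^ 2 := by
      have := Real.sq_sqrt (show (0:ℝ) ≤ 2 * (ω - γ ^ 2) by linarith)
      nlinarith [Real.sqrt_nonneg (2 * (ω - γ ^ 2))]
    have hle2 : p ^ 2 ≤ 2 * ω := (Real.le_sqrt hp.le (by linarith)).mp hle
    have hs : Real.sqrt (ω - p ^ 2 / 2) < γ :=
      (Real.sqrt_lt' hγ).mpr (by linarith)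
    rw [key p hp.le]
    exact mul_neg_of_pos_of_neg (by linarith) (by linarith)
end

section
/- Let ω > 0 and 0 < γ < sqrt(ω). Define F_-(p) = sqrt(p²(ω - p²/2)) - (p/2)(γ - sqrt(ω - p²/2)) for p ∈ (0, sqrt(2ω)]. Then F_-(p) > 0 for 0 < p < sqrt(2(ω - γ²/9)), F_-(sqrt(2(ω - γ²/9))) = 0, and F_-(p) < 0 for sqrt(2(ω - γ²/9)) < p ≤ sqrt(2ω). -/
theorem stmt_10 (ω γ : ℝ) (hω : 0 < ω) (hγ : 0 < γ) (hγω : γ < Real.sqrt ω) :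
    (∀ p : ℝ, 0 < p → p < Real.sqrt (2 * (ω - γ ^ 2 / 9)) →
      0 < Real.sqrt (p ^ 2 * (ω - p ^ 2 / 2))
        - p / 2 * (γ - Real.sqrt (ω - p ^ 2 / 2))) ∧
    Real.sqrt (Real.sqrt (2 * (ω - γ ^ 2 / 9)) ^ 2
        * (ω - Real.sqrt (2 * (ω - γ ^ 2 / 9)) ^ 2 / 2))
      - Real.sqrt (2 * (ω - γ ^ 2 / 9)) / 2
        * (γ - Real.sqrt (ω - Real.sqrt (2 * (ω - γ ^ 2 / 9)) ^ 2 / 2)) = 0 ∧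
    (∀ p : ℝ, Real.sqrt (2 * (ω - γ ^ 2 / 9)) < p → p ≤ Real.sqrt (2 * ω) →
      Real.sqrt (p ^ 2 * (ω - p ^ 2 / 2))
        - p / 2 * (γ - Real.sqrt (ω - p ^ 2 / 2)) < 0) := by
  have hγ2 : γ ^ 2 < ω := by
    nlinarith [Real.sq_sqrt hω.le, Real.sqrt_nonneg ω]
  have hA : 0 < 2 * (ω - γ ^ 2 / 9) := by nlinarith
  have hAsq : Real.sqrt (2 * (ω - γ ^ 2 / 9)) ^ 2 = 2 * (ω - γ ^ 2 / 9) :=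
    Real.sq_sqrt hA.le
  have key : ∀ p : ℝ, 0 < p → p ^ 2 ≤ 2 * ω →
      Real.sqrt (p ^ 2 * (ω - p ^ 2 / 2)) = p * Real.sqrt (ω - p ^ 2 / 2) := by
    intro p hp hp2
    rw [Real.sqrt_mul (sq_nonneg p), Real.sqrt_sq hp.le]
  refine ⟨?_, ?_, ?_⟩
  · intro p hp hlt
    have hp2 : p ^ 2 < 2 * (ω - γ ^ 2 / 9) := by
      have := Real.sq_sqrt hA.le
      nlinarith [Real.sqrt_nonneg (2 * (ω - γ ^ 2 / 9))]
    have h1 : γ ^ 2 / 9 < ω - p ^ 2 / 2 := by nlinarith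
    have hs : γ / 3 < Real.sqrt (ω - p ^ 2 / 2) := by
      have := Real.sqrt_lt_sqrt (by positivity : (0:ℝ) ≤ γ ^ 2 / 9) h1
      calc γ / 3 = Real.sqrt (γ ^ 2 / 9) := by
            rw [show γ ^ 2 / 9 = (γ/3)^2 by ring, Real.sqrt_sq (by positivity)]
        _ < _ := this
    rw [key p hp (by nlinarith)]
    nlinarith [Real.sqrt_nonneg (ω - p ^ 2 / 2)]
  · set P := Real.sqrt (2 * (ω - γ ^ 2 / 9)) with hP
    have hPpos : 0 < P := Real.sqrt_pos.mpr hA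
    have h1 : ω - P ^ 2 / 2 = γ ^ 2 / 9 := by rw [hAsq]; ring
    have h2 : Real.sqrt (ω - P ^ 2 / 2) = γ / 3 := by
      rw [h1, show γ ^ 2 / 9 = (γ/3)^2 by ring, Real.sqrt_sq (by positivity)]
    rw [key P hPpos (by nlinarith), h2]; ring
  · intro p hlt hle
    have hPpos : 0 ≤ Real.sqrt (2 * (ω - γ ^ 2 / 9)) := Real.sqrt_nonneg _
    have hp : 0 < p := lt_of_le_of_lt hPpos hlt
    have hp2 : p ^ 2 ≤ 2 * ω := by
      nlinarith [Real.sq_sqrt (by positivity : (0:ℝ) ≤ 2 * ω),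
        Real.sqrt_nonneg (2 * ω)]
    have hgt : 2 * (ω - γ ^ 2 / 9) < p ^ 2 := by nlinarith
    have hnn : 0 ≤ ω - p ^ 2 / 2 := by nlinarith
    have hs : Real.sqrt (ω - p ^ 2 / 2) < γ / 3 := by
      nlinarith [Real.sq_sqrt hnn, Real.sqrt_nonneg (ω - p ^ 2 / 2)]
    rw [key p hp hp2]
    nlinarith [Real.sqrt_nonneg (ω - p ^ 2 / 2)]
end

section
/- Let ω > 0, 0 < γ < sqrt(ω), and v_h(x) = sqrt(2ω) sech(sqrt(ω)x - arctanh(γ/sqrt(ω))) for x ∈ [0,∞). Then v_h solves -v'' + ωv - v³ = 0 on (0,∞) with the Robin boundary condition v_h'(0) = γ v_h(0), and consequently ω‖v_h‖²_{L²(0,∞)} + ‖v_h'‖²_{L²(0,∞)} - ‖v_h‖⁴_{L⁴(0,∞)} + γ|v_h(0)|² = 0. -/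
/-!
With `s = √ω` and `tanh a = γ / s`, the function is `v x = c / cosh (s x - a)` with `c² = 2 s²`.
Differentiating gives `v' = -s tanh(s x - a) v`, from which both the equation (using
`c² sech² = 2 s² (1 - tanh²)`) and the Robin condition at `0` follow. Each of `v²`, `v'²`, `v⁴`
is a polynomial in `T = tanh (s x - a)` times `T' = s sech² (s x - a)`, so the three integrals
are evaluated exactly, `T` running from `-tanh a` to `1`; the energy identity is then an
identity between polynomials in `tanh a`.
-/

open MeasureTheory

/-- The inverse hyperbolic tangent, `arctanh x = (1/2) log ((1+x)/(1-x))`. -/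
noncomputable def arctanh (x : ℝ) : ℝ := Real.log ((1 + x) / (1 - x)) / 2

open Real Filter Topology Set

theorem arctanh_eq_artanh {t : ℝ} (ht : t ∈ Icc (-1) 1) : arctanh t = artanh t := by
  rw [artanh_eq_half_log ht, arctanh]
  ring

theorem tanh_arctanh {t : ℝ} (ht : t ∈ Ioo (-1) 1) : tanh (arctanh t) = t := by
  rw [arctanh_eq_artanh (Ioo_subset_Icc_self ht), tanh_artanh ht]

namespace Real

theorem one_sub_tanh_sq (x : ℝ) : 1 - tanh x ^ 2 = 1 / cosh x ^ 2 := by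
  have := cosh_pos x
  rw [tanh_eq_sinh_div_cosh]
  field_simp
  linear_combination cosh_sq_sub_sinh_sq x

theorem hasDerivAt_tanh (x : ℝ) : HasDerivAt tanh (1 / cosh x ^ 2) x := by
  have h := (hasDerivAt_sinh x).div (hasDerivAt_cosh x) (cosh_pos x).ne'
  rw [show tanh = sinh / cosh from funext fun y => tanh_eq_sinh_div_cosh y]
  exact h.congr_deriv (by rw [← cosh_sq_sub_sinh_sq x]; ring)

theorem tendsto_tanh_atTop : Tendsto tanh atTop (𝓝 1) := by
  have h : Tendsto (fun x : ℝ => 1 - 2 / (exp (2 * x) + 1)) atTop (𝓝 (1 - 0)) :=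
    tendsto_const_nhds.sub <| tendsto_const_nhds.div_atTop <| tendsto_atTop_add_const_right _ 1 <|
      tendsto_exp_atTop.comp <| tendsto_id.const_mul_atTop two_pos
  rw [sub_zero] at h
  refine h.congr fun x => ?_
  have h2x : exp (2 * x) = exp x ^ 2 := by rw [← exp_nat_mul]; norm_num
  rw [tanh_eq, exp_neg, h2x]
  field_simp
  ring

end Real

theorem hasDerivAt_mul_sub_const (s a x : ℝ) : HasDerivAt (fun x => s * x - a) s x := by
  simpa using ((hasDerivAt_id x).const_mul s).sub_const a

theorem integral_Ioi_comp_tanh {P p : ℝ → ℝ} (hP : ∀ T, HasDerivAt P (p T) T)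
    (hp : ∀ y, 0 ≤ p (tanh y)) {s : ℝ} (hs : 0 < s) (a : ℝ) :
    ∫ x in Ioi 0, p (tanh (s * x - a)) * (s / cosh (s * x - a) ^ 2) = P 1 - P (tanh (-a)) := by
  have hderiv (x : ℝ) : HasDerivAt (fun x => P (tanh (s * x - a)))
      (p (tanh (s * x - a)) * (s / cosh (s * x - a) ^ 2)) x :=
    ((hP _).comp x ((hasDerivAt_tanh _).comp x (hasDerivAt_mul_sub_const s a x))).congr_deriv
      (by simp only [Function.comp_apply]; ring)
  have hlim : Tendsto (fun x => P (tanh (s * x - a))) atTop (𝓝 (P 1)) :=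
    (hP 1).continuousAt.tendsto.comp <| tendsto_tanh_atTop.comp <|
      tendsto_atTop_add_const_right _ _ <| tendsto_id.const_mul_atTop hs
  rw [integral_Ioi_of_hasDerivAt_of_nonneg' (fun x _ => hderiv x)
    (fun x _ => mul_nonneg (hp _) (by positivity)) hlim]
  simp

noncomputable def solitonProfile (c s a x : ℝ) : ℝ := c / cosh (s * x - a)

section solitonProfile

variable (c s a : ℝ)

theorem hasDerivAt_solitonProfile (x : ℝ) :
    HasDerivAt (solitonProfile c s a) (-s * tanh (s * x - a) * solitonProfile c s a x) x := by
  have hcosh := (hasDerivAt_cosh _).comp x (hasDerivAt_mul_sub_const s a x)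
  refine ((hasDerivAt_const x c).div hcosh (cosh_pos _).ne').congr_deriv ?_
  simp only [Function.comp_apply, solitonProfile, tanh_eq_sinh_div_cosh]
  field_simp
  ring

theorem deriv_solitonProfile :
    deriv (solitonProfile c s a) = fun x => -s * tanh (s * x - a) * solitonProfile c s a x :=
  funext fun x => (hasDerivAt_solitonProfile c s a x).deriv

theorem solitonProfile_sq (x : ℝ) :
    solitonProfile c s a x ^ 2 = c ^ 2 * (1 - tanh (s * x - a) ^ 2) := by
  rw [solitonProfile, one_sub_tanh_sq, div_pow, mul_one_div]

theorem deriv_deriv_solitonProfile (hc : c ^ 2 = 2 * s ^ 2) (x : ℝ) :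
    deriv (deriv (solitonProfile c s a)) x =
      s ^ 2 * solitonProfile c s a x - solitonProfile c s a x ^ 3 := by
  have htanh := ((hasDerivAt_tanh _).comp x (hasDerivAt_mul_sub_const s a x)).const_mul (-s)
  have h : HasDerivAt (deriv (solitonProfile c s a))
      (-s * (1 / cosh (s * x - a) ^ 2 * s) * solitonProfile c s a x
        + -s * tanh (s * x - a) * (-s * tanh (s * x - a) * solitonProfile c s a x)) x := by
    rw [deriv_solitonProfile]
    exact htanh.mul (hasDerivAt_solitonProfile c s a x)
  rw [h.deriv, pow_succ (solitonProfile c s a x), solitonProfile_sq, hc, ← one_sub_tanh_sq]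
  ring

theorem deriv_solitonProfile_zero :
    deriv (solitonProfile c s a) 0 = s * tanh a * solitonProfile c s a 0 := by
  simp only [deriv_solitonProfile, mul_zero, zero_sub, tanh_neg]
  ring

variable {s}

theorem integral_solitonProfile_sq (hs : 0 < s) :
    ∫ x in Ioi 0, solitonProfile c s a x ^ 2 = c ^ 2 / s * (1 + tanh a) :=
  calc ∫ x in Ioi 0, solitonProfile c s a x ^ 2
      = ∫ x in Ioi 0, c ^ 2 / s * (s / cosh (s * x - a) ^ 2) := by
        congr 1 with x
        rw [solitonProfile, div_pow]
        field_simp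
    _ = c ^ 2 / s * (1 + tanh a) := by
        rw [integral_Ioi_comp_tanh (P := fun T => c ^ 2 / s * T) (p := fun _ => c ^ 2 / s)
          (fun T => by simpa using (hasDerivAt_id T).const_mul (c ^ 2 / s))
          (fun _ => by positivity) hs a, tanh_neg]
        ring

theorem integral_deriv_solitonProfile_sq (hs : 0 < s) :
    ∫ x in Ioi 0, deriv (solitonProfile c s a) x ^ 2 = c ^ 2 * s * (1 + tanh a ^ 3) / 3 :=
  calc ∫ x in Ioi 0, deriv (solitonProfile c s a) x ^ 2
      = ∫ x in Ioi 0, c ^ 2 * s * tanh (s * x - a) ^ 2 * (s / cosh (s * x - a) ^ 2) := by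
        congr 1 with x
        simp only [deriv_solitonProfile, solitonProfile]
        field_simp
    _ = c ^ 2 * s * (1 + tanh a ^ 3) / 3 := by
        rw [integral_Ioi_comp_tanh (P := fun T => c ^ 2 * s * T ^ 3 / 3)
          (p := fun T => c ^ 2 * s * T ^ 2)
          (fun T => ((hasDerivAt_pow 3 T).const_mul (c ^ 2 * s) |>.div_const 3).congr_deriv
            (by ring))
          (fun _ => by positivity) hs a, tanh_neg]
        ring

theorem integral_solitonProfile_pow_four (hs : 0 < s) :
    ∫ x in Ioi 0, solitonProfile c s a x ^ 4 =
      c ^ 4 / s * (2 / 3 + tanh a - tanh a ^ 3 / 3) :=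
  calc ∫ x in Ioi 0, solitonProfile c s a x ^ 4
      = ∫ x in Ioi 0, c ^ 4 / s * (1 - tanh (s * x - a) ^ 2) * (s / cosh (s * x - a) ^ 2) := by
        congr 1 with x
        rw [solitonProfile, one_sub_tanh_sq]
        field_simp
    _ = c ^ 4 / s * (2 / 3 + tanh a - tanh a ^ 3 / 3) := by
        rw [integral_Ioi_comp_tanh (P := fun T => c ^ 4 / s * (T - T ^ 3 / 3))
          (p := fun T => c ^ 4 / s * (1 - T ^ 2))
          (fun T => (((hasDerivAt_id T).sub ((hasDerivAt_pow 3 T).div_const 3)).const_mul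
            (c ^ 4 / s)).congr_deriv (by simp))
          (fun y => by have := tanh_sq_lt_one y; positivity) hs a, tanh_neg]
        ring

theorem solitonProfile_energy (hs : 0 < s) (hc : c ^ 2 = 2 * s ^ 2) :
    s ^ 2 * (∫ x in Ioi 0, solitonProfile c s a x ^ 2)
      + (∫ x in Ioi 0, deriv (solitonProfile c s a) x ^ 2)
      - (∫ x in Ioi 0, solitonProfile c s a x ^ 4)
      + s * tanh a * solitonProfile c s a 0 ^ 2 = 0 := by
  rw [integral_solitonProfile_sq c a hs, integral_deriv_solitonProfile_sq c a hs,
    integral_solitonProfile_pow_four c a hs, solitonProfile_sq, mul_zero, zero_sub, tanh_neg,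
    show c ^ 4 = (c ^ 2) ^ 2 by ring, hc]
  field_simp
  ring

end solitonProfile

theorem stmt_13 (ω γ : ℝ) (hω : 0 < ω) (hγ : 0 < γ) (hγω : γ < Real.sqrt ω)
    (v : ℝ → ℝ)
    (hv : v = fun x : ℝ =>
      Real.sqrt (2 * ω) / Real.cosh (Real.sqrt ω * x - arctanh (γ / Real.sqrt ω))) :
    (∀ x ∈ Set.Ioi (0 : ℝ), deriv (deriv v) x = ω * v x - v x ^ 3) ∧
    deriv v 0 = γ * v 0 ∧
    ω * (∫ x in Set.Ioi (0 : ℝ), v x ^ 2) + (∫ x in Set.Ioi (0 : ℝ), deriv v x ^ 2)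
      - (∫ x in Set.Ioi (0 : ℝ), v x ^ 4) + γ * |v 0| ^ 2 = 0 := by
  set s := √ω
  set a := arctanh (γ / s)
  have hs : 0 < s := sqrt_pos.mpr hω
  have hω_eq : ω = s ^ 2 := (sq_sqrt hω.le).symm
  have hc : √(2 * ω) ^ 2 = 2 * s ^ 2 := by rw [sq_sqrt (by positivity), hω_eq]
  have hγ_eq : γ = s * tanh a := by
    rw [tanh_arctanh ⟨by linarith [div_pos hγ hs], (div_lt_one hs).mpr hγω⟩]
    field_simp
  obtain rfl : v = solitonProfile √(2 * ω) s a := hv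
  refine ⟨fun x _ => ?_, ?_, ?_⟩
  · rw [deriv_deriv_solitonProfile _ _ _ hc, ← hω_eq]
  · rw [deriv_solitonProfile_zero, hγ_eq]
  · have h := solitonProfile_energy _ a hs hc
    rwa [← hω_eq, ← hγ_eq, ← sq_abs] at h
end

section
/- Let ω > 0, γ > 0, L > 0, and let v be defined by v_c(x) = sqrt(2ω) sech(sqrt(ω)x) on [-L,L] and v_h(x) = sqrt(2ω) sech(sqrt(ω)(x+L)) on [0,∞). Then the Nehari functional on the tadpole satisfies I(v) = ‖v'‖²_{L²} + γ|v(v)|² + ω‖v‖²_{L²} - ‖v‖⁴_{L⁴} = 2γω(1 - tanh²(sqrt(ω)L)) - 2ω^{3/2} tanh(sqrt(ω)L)(1 - tanh²(sqrt(ω)L)); in particular I(v) ≤ 0 if and only if γ ≤ sqrt(ω) tanh(sqrt(ω)L). -/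
/-! On the half-line the profile is the loop soliton `√(2ω) sech(√ω x)` translated by `L`, so each
loop-plus-half-line integral is an integral of the soliton over `(-L, ∞)`. The integrands `v'²`, `v²`
and `v⁴` are all of the form `(a + b tanh²(√ω x)) sech²(√ω x)`, the exact derivative of
`(a tanh + b tanh³ / 3)(√ω x) / √ω`. With `T = tanh(√ω L)` the kinetic, mass and quartic parts add
up to `-2ω√ω T (1 - T²)`, and the vertex term is `γ · 2ω sech²(√ω L) = 2γω (1 - T²)`. -/

open MeasureTheory Real Filter Set Topology

lemma Real.hasDerivAt_tanh_s14 (x : ℝ) : HasDerivAt tanh (1 / cosh x ^ 2) x := by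
  have h := (hasDerivAt_sinh x).div (hasDerivAt_cosh x) (cosh_pos x).ne'
  rw [show sinh / cosh = tanh from funext fun y => (tanh_eq_sinh_div_cosh y).symm] at h
  refine h.congr_deriv ?_
  rw [← cosh_sq_sub_sinh_sq x]
  ring

lemma Real.one_sub_tanh_sq_s14 (x : ℝ) : 1 - tanh x ^ 2 = 1 / cosh x ^ 2 := by
  have := (cosh_pos x).ne'
  rw [tanh_eq_sinh_div_cosh]
  field_simp
  linear_combination cosh_sq_sub_sinh_sq x

lemma Real.tendsto_tanh_atTop_s14 : Tendsto tanh atTop (𝓝 1) := by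
  have h : ∀ x, tanh x = 1 - 2 / (exp (2 * x) + 1) := fun x => by
    rw [tanh_eq, show 2 * x = x + x by ring, exp_add, exp_neg]
    have := (exp_pos x).ne'
    field_simp
    ring
  have hexp : Tendsto (fun x : ℝ => exp (2 * x) + 1) atTop atTop :=
    tendsto_atTop_add_const_right _ 1 (tendsto_exp_atTop.comp (tendsto_id.const_mul_atTop two_pos))
  have := ((tendsto_const_nhds (x := (2 : ℝ))).div_atTop hexp).const_sub 1
  rw [sub_zero] at this
  exact this.congr fun x => (h x).symm

lemma integral_Ioi_comp_add_const (f : ℝ → ℝ) (c d : ℝ) :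
    ∫ x in Ioi c, f (x + d) = ∫ x in Ioi (c + d), f x := by
  rw [← (measurePreserving_add_right volume d).setIntegral_preimage_emb
    (measurableEmbedding_addRight d) f (Ioi (c + d)), preimage_add_const_Ioi, add_sub_cancel_right]

section SechSquared

variable {a b s : ℝ}

lemma hasDerivAt_tanh_cubic (hs : s ≠ 0) (x : ℝ) :
    HasDerivAt (fun x => (a * tanh (s * x) + b / 3 * tanh (s * x) ^ 3) / s)
      ((a + b * tanh (s * x) ^ 2) / cosh (s * x) ^ 2) x := by
  have ht : HasDerivAt (fun x => tanh (s * x)) (1 / cosh (s * x) ^ 2 * s) x :=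
    (hasDerivAt_tanh_s14 (s * x)).comp (h₂ := tanh) x (hasDerivAt_const_mul s)
  refine (((ht.const_mul a).add ((ht.pow 3).const_mul (b / 3))).div_const s).congr_deriv ?_
  field_simp
  ring

lemma sech_sq_mul_nonneg (ha : 0 ≤ a) (hab : 0 ≤ a + b) (y : ℝ) :
    0 ≤ (a + b * tanh y ^ 2) / cosh y ^ 2 := by
  have ht : tanh y ^ 2 ≤ 1 := by
    rw [sq_le_one_iff_abs_le_one, abs_le]
    exact ⟨(neg_one_lt_tanh y).le, (tanh_lt_one y).le⟩
  have : 0 ≤ a + b * tanh y ^ 2 := by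
    nlinarith [mul_nonneg (sub_nonneg.2 ht) ha, mul_nonneg (sq_nonneg (tanh y)) hab]
  positivity

lemma tendsto_tanh_cubic_atTop (hs : 0 < s) :
    Tendsto (fun x => (a * tanh (s * x) + b / 3 * tanh (s * x) ^ 3) / s) atTop
      (𝓝 ((a + b / 3) / s)) := by
  have ht := tendsto_tanh_atTop_s14.comp (tendsto_id.const_mul_atTop hs)
  simpa using (((ht.const_mul a).add ((ht.pow 3).const_mul (b / 3))).div_const s)

lemma integrableOn_Ioi_sech_sq_mul (hs : 0 < s) (ha : 0 ≤ a) (hab : 0 ≤ a + b) (c : ℝ) :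
    IntegrableOn (fun x => (a + b * tanh (s * x) ^ 2) / cosh (s * x) ^ 2) (Ioi c) :=
  integrableOn_Ioi_deriv_of_nonneg' (fun x _ => hasDerivAt_tanh_cubic hs.ne' x)
    (fun _ _ => sech_sq_mul_nonneg ha hab _) (tendsto_tanh_cubic_atTop hs)

lemma integral_Ioi_sech_sq_mul (hs : 0 < s) (ha : 0 ≤ a) (hab : 0 ≤ a + b) (c : ℝ) :
    ∫ x in Ioi c, (a + b * tanh (s * x) ^ 2) / cosh (s * x) ^ 2
      = (a * (1 - tanh (s * c)) + b / 3 * (1 - tanh (s * c) ^ 3)) / s := by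
  rw [integral_Ioi_of_hasDerivAt_of_nonneg' (fun x _ => hasDerivAt_tanh_cubic hs.ne' x)
    (fun _ _ => sech_sq_mul_nonneg ha hab _) (tendsto_tanh_cubic_atTop hs)]
  ring

lemma integral_tadpole_sech_sq_mul (hs : 0 < s) (ha : 0 ≤ a) (hab : 0 ≤ a + b) {g : ℝ → ℝ}
    (hg : ∀ x, g x = (a + b * tanh (s * x) ^ 2) / cosh (s * x) ^ 2) (L : ℝ) :
    (∫ x in (-L)..L, g x) + ∫ x in Ioi 0, g (x + L)
      = (a * (1 + tanh (s * L)) + b / 3 * (1 + tanh (s * L) ^ 3)) / s := by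
  rw [integral_Ioi_comp_add_const, zero_add, funext hg, intervalIntegral.integral_interval_add_Ioi
    (integrableOn_Ioi_sech_sq_mul hs ha hab _) (integrableOn_Ioi_sech_sq_mul hs ha hab _),
    integral_Ioi_sech_sq_mul hs ha hab, mul_neg, tanh_neg]
  ring

end SechSquared

noncomputable def soliton (ω x : ℝ) : ℝ := √(2 * ω) / cosh (√ω * x)

section Soliton

variable {ω : ℝ}

lemma soliton_sq (hω : 0 ≤ ω) (x : ℝ) : soliton ω x ^ 2 = 2 * ω / cosh (√ω * x) ^ 2 := by
  rw [soliton, div_pow, sq_sqrt (by positivity)]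

lemma soliton_pow_four (hω : 0 ≤ ω) (x : ℝ) :
    soliton ω x ^ 4 = 4 * ω ^ 2 * (1 - tanh (√ω * x) ^ 2) / cosh (√ω * x) ^ 2 := by
  rw [one_sub_tanh_sq_s14, show soliton ω x ^ 4 = (soliton ω x ^ 2) ^ 2 by ring, soliton_sq hω]
  ring

lemma hasDerivAt_soliton (x : ℝ) :
    HasDerivAt (soliton ω) (-(√ω * tanh (√ω * x) * soliton ω x)) x := by
  have hc : HasDerivAt (fun x => cosh (√ω * x)) (sinh (√ω * x) * √ω) x :=
    (hasDerivAt_cosh (√ω * x)).comp (h₂ := cosh) x (hasDerivAt_const_mul √ω)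
  refine ((hc.inv (cosh_pos _).ne').const_mul √(2 * ω)).congr_deriv ?_
  rw [soliton, tanh_eq_sinh_div_cosh]
  ring

lemma deriv_soliton_sq (hω : 0 ≤ ω) (x : ℝ) :
    deriv (soliton ω) x ^ 2 = 2 * ω ^ 2 * tanh (√ω * x) ^ 2 / cosh (√ω * x) ^ 2 := by
  rw [(hasDerivAt_soliton x).deriv, neg_sq, mul_pow, mul_pow, sq_sqrt hω, soliton_sq hω]
  ring

end Soliton

theorem stmt_14_general (ω γ L : ℝ) (hω : 0 < ω)
    (vc vh : ℝ → ℝ)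
    (hvc : vc = fun x : ℝ => Real.sqrt (2 * ω) / Real.cosh (Real.sqrt ω * x))
    (hvh : vh = fun x : ℝ => Real.sqrt (2 * ω) / Real.cosh (Real.sqrt ω * (x + L))) :
    ((∫ x in (-L)..L, deriv vc x ^ 2) + (∫ x in Set.Ioi (0 : ℝ), deriv vh x ^ 2)
        + γ * |vh 0| ^ 2
        + ω * ((∫ x in (-L)..L, vc x ^ 2) + ∫ x in Set.Ioi (0 : ℝ), vh x ^ 2)
        - ((∫ x in (-L)..L, vc x ^ 4) + ∫ x in Set.Ioi (0 : ℝ), vh x ^ 4))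
      = 2 * γ * ω * (1 - Real.tanh (Real.sqrt ω * L) ^ 2)
        - 2 * (ω * Real.sqrt ω) * Real.tanh (Real.sqrt ω * L)
          * (1 - Real.tanh (Real.sqrt ω * L) ^ 2) ∧
    (2 * γ * ω * (1 - Real.tanh (Real.sqrt ω * L) ^ 2)
        - 2 * (ω * Real.sqrt ω) * Real.tanh (Real.sqrt ω * L)
          * (1 - Real.tanh (Real.sqrt ω * L) ^ 2) ≤ 0
      ↔ γ ≤ Real.sqrt ω * Real.tanh (Real.sqrt ω * L)) := by
  obtain rfl : vc = soliton ω := hvc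
  obtain rfl : vh = fun x => soliton ω (x + L) := hvh
  have hs : 0 < √ω := sqrt_pos.2 hω
  simp only [deriv_comp_add_const]
  rw [integral_tadpole_sech_sq_mul (a := 0) (b := 2 * ω ^ 2) hs le_rfl (by positivity)
      (fun x => by rw [deriv_soliton_sq hω.le]; ring),
    integral_tadpole_sech_sq_mul (a := 2 * ω) (b := 0) hs (by positivity) (by positivity)
      (fun x => by rw [soliton_sq hω.le]; ring),
    integral_tadpole_sech_sq_mul (a := 4 * ω ^ 2) (b := -(4 * ω ^ 2)) hs (by positivity)
      (by simp) (fun x => by rw [soliton_pow_four hω.le]; ring),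
    zero_add, sq_abs, soliton_sq hω.le, div_eq_mul_inv _ (cosh _ ^ 2), ← one_div,
    ← one_sub_tanh_sq_s14]
  have hT : 0 < 1 - tanh (√ω * L) ^ 2 := by rw [one_sub_tanh_sq_s14]; positivity
  have hsq : √ω ^ 2 = ω := sq_sqrt hω.le
  generalize √ω = s at *
  generalize tanh (s * L) = T at *
  subst hsq
  constructor
  · field_simp
    ring
  · rw [show 2 * γ * s ^ 2 * (1 - T ^ 2) - 2 * (s ^ 2 * s) * T * (1 - T ^ 2)
        = (2 * s ^ 2 * (1 - T ^ 2)) * (γ - s * T) by ring]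
    exact (smul_nonpos_iff_nonpos_of_pos_left (α := ℝ) (by positivity)).trans sub_nonpos

theorem stmt_14 (ω γ L : ℝ) (hω : 0 < ω) (hγ : 0 < γ) (hL : 0 < L)
    (vc vh : ℝ → ℝ)
    (hvc : vc = fun x : ℝ => Real.sqrt (2 * ω) / Real.cosh (Real.sqrt ω * x))
    (hvh : vh = fun x : ℝ => Real.sqrt (2 * ω) / Real.cosh (Real.sqrt ω * (x + L))) :
    ((∫ x in (-L)..L, deriv vc x ^ 2) + (∫ x in Set.Ioi (0 : ℝ), deriv vh x ^ 2)
        + γ * |vh 0| ^ 2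
        + ω * ((∫ x in (-L)..L, vc x ^ 2) + ∫ x in Set.Ioi (0 : ℝ), vh x ^ 2)
        - ((∫ x in (-L)..L, vc x ^ 4) + ∫ x in Set.Ioi (0 : ℝ), vh x ^ 4))
      = 2 * γ * ω * (1 - Real.tanh (Real.sqrt ω * L) ^ 2)
        - 2 * (ω * Real.sqrt ω) * Real.tanh (Real.sqrt ω * L)
          * (1 - Real.tanh (Real.sqrt ω * L) ^ 2) ∧
    (2 * γ * ω * (1 - Real.tanh (Real.sqrt ω * L) ^ 2)
        - 2 * (ω * Real.sqrt ω) * Real.tanh (Real.sqrt ω * L)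
          * (1 - Real.tanh (Real.sqrt ω * L) ^ 2) ≤ 0
      ↔ γ ≤ Real.sqrt ω * Real.tanh (Real.sqrt ω * L)) :=
  stmt_14_general ω γ L hω vc vh hvc hvh
end
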